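/- There is a universal constant C such that for every smooth L-periodic strictly positive function h, ∫_{Ω_h} |∂_y ψ|² dx dy ≤ C ‖h‖_{L^∞(0,L)}^{1/2} ‖h''‖_{L²(0,L)} (∫₀ᴸ dx/h(x))^{1/2}, where ψ(x,y) = h'(x) χ₀(y/h(x)), χ₀(z) = z²(3−2z), and Ω_h = {(x,y) : 0 < x < L, 0 < y < h(x)}. -/

import Mathlib

open MeasureTheory intervalIntegral

/-- The cut-off profile `χ₀(z) = z²(3 - 2z)`. -/
def chi0 (z : ℝ) : ℝ := z ^ 2 * (3 - 2 * z)

private lemma log_sq_le {t : ℝ} (ht : 0 < t) (ht1 : t ≤ 1) : (Real.log t) ^ 2 ≤ 4 / t := by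
  have h1 : Real.log t ^ 2 = Real.log t⁻¹ ^ 2 := by rw [Real.log_inv]; ring
  have h2 : 0 ≤ Real.log t⁻¹ := Real.log_nonneg ((one_le_inv_iff₀).2 ⟨ht, ht1⟩)
  have h3 : Real.log t⁻¹ ≤ 2 * Real.sqrt t⁻¹ := by
    have hs := Real.log_le_sub_one_of_pos (Real.sqrt_pos.2 (inv_pos.2 ht))
    have hl : Real.log (Real.sqrt t⁻¹) = Real.log t⁻¹ / 2 := Real.log_sqrt (inv_pos.2 ht).le
    nlinarith [Real.sqrt_nonneg t⁻¹]
  have h5 : (2 * Real.sqrt t⁻¹) ^ 2 = 4 / t := by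
    rw [mul_pow, Real.sq_sqrt (inv_pos.2 ht).le]; field_simp; norm_num
  rw [h1, ← h5]; nlinarith

/-- Cauchy–Schwarz for interval integrals of continuous functions. -/
private lemma cs_int {a b : ℝ} (hab : a ≤ b) {f g : ℝ → ℝ} (hf : Continuous f)
    (hg : Continuous g) :
    ∫ x in a..b, f x * g x ≤
      Real.sqrt (∫ x in a..b, f x ^ 2) * Real.sqrt (∫ x in a..b, g x ^ 2) := by
  have hmem : ∀ {u : ℝ → ℝ}, Continuous u → MemLp u (ENNReal.ofReal (2:ℝ))
      (volume.restrict (Set.Ioc a b)) := by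
    intro u hu
    obtain ⟨C, hC⟩ := (isCompact_Icc (a := a) (b := b)).exists_bound_of_continuousOn
      hu.continuousOn
    refine MemLp.of_bound hu.aestronglyMeasurable C ?_
    refine (ae_restrict_iff' measurableSet_Ioc).2 (Filter.Eventually.of_forall fun x hx => ?_)
    exact hC x (Set.Ioc_subset_Icc_self hx)
  have hpq : Real.HolderConjugate 2 2 := Real.HolderConjugate.two_two
  have hH := integral_mul_norm_le_Lp_mul_Lq (μ := volume.restrict (Set.Ioc a b)) hpq
    (hmem hf) (hmem hg)
  have e1 : ∀ (u : ℝ → ℝ) (x : ℝ), ‖u x‖ ^ (2:ℝ) = u x ^ 2 := fun u x => by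
    rw [show ((2:ℝ)) = ((2:ℕ):ℝ) by norm_num, Real.rpow_natCast]
    simp [Real.norm_eq_abs, sq_abs]
  simp only [e1] at hH
  rw [intervalIntegral.integral_of_le hab, intervalIntegral.integral_of_le hab,
    intervalIntegral.integral_of_le hab]
  calc ∫ x in Set.Ioc a b, f x * g x ≤ ∫ x in Set.Ioc a b, ‖f x‖ * ‖g x‖ := by
        refine integral_mono ((hf.mul hg).integrableOn_Ioc) ((hf.norm.mul hg.norm).integrableOn_Ioc)
          fun x => ?_
        exact (le_abs_self _).trans_eq (abs_mul _ _)
    _ ≤ (∫ x in Set.Ioc a b, f x ^ 2) ^ (1/(2:ℝ)) * (∫ x in Set.Ioc a b, g x ^ 2) ^ (1/(2:ℝ)) := hH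
    _ = _ := by
        rw [Real.sqrt_eq_rpow, Real.sqrt_eq_rpow]

theorem stmt13 :
    ∃ C : ℝ, 0 < C ∧ ∀ L : ℝ, 0 < L → ∀ h : ℝ → ℝ, ContDiff ℝ (⊤ : ℕ∞) h →
      Function.Periodic h L → (∀ x, 0 < h x) →
      (∫ x in (0:ℝ)..L, ∫ y in (0:ℝ)..(h x),
          (deriv (fun υ => deriv h x * chi0 (υ / h x)) y) ^ 2)
        ≤ C * Real.sqrt (sSup ((fun x => |h x|) '' Set.Icc 0 L))
            * Real.sqrt (∫ x in (0:ℝ)..L, (deriv (deriv h) x) ^ 2)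
            * Real.sqrt (∫ x in (0:ℝ)..L, 1 / h x) := by
  refine ⟨12/5, by norm_num, fun L hL h hcd hper hpos => ?_⟩
  have hc : Continuous h := hcd.continuous
  have hsm : ContDiff ℝ ((⊤:ℕ∞):WithTop ℕ∞) h := hcd.of_le (by simp)
  have hd : Differentiable ℝ h := (contDiff_infty_iff_deriv.mp hsm).1
  have hcd1 : ContDiff ℝ ((⊤:ℕ∞):WithTop ℕ∞) (deriv h) := (contDiff_infty_iff_deriv.mp hsm).2
  have hd1 : Differentiable ℝ (deriv h) := (contDiff_infty_iff_deriv.mp hcd1).1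
  have hc1 : Continuous (deriv h) := hcd1.continuous
  have hc2 : Continuous (deriv (deriv h)) := (contDiff_infty_iff_deriv.mp hcd1).2.continuous
  set M : ℝ := sSup ((fun x => |h x|) '' Set.Icc 0 L) with hM
  have hMb : BddAbove ((fun x => |h x|) '' Set.Icc 0 L) :=
    (isCompact_Icc.image hc.abs).bddAbove
  have hle : ∀ x ∈ Set.Icc (0:ℝ) L, h x ≤ M := by
    intro x hx
    calc h x = |h x| := (abs_of_pos (hpos x)).symm
      _ ≤ M := le_csSup hMb ⟨x, hx, rfl⟩
  have hM0 : 0 < M :=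
    lt_of_lt_of_le (hpos 0) (hle 0 ⟨le_refl 0, hL.le⟩)
  -- Step 1: compute the inner integral
  have key : ∀ x : ℝ, (∫ y in (0:ℝ)..(h x),
      (deriv (fun υ => deriv h x * chi0 (υ / h x)) y) ^ 2)
      = 6/5 * ((deriv h x) ^ 2 / h x) := by
    intro x
    set b := h x with hb
    set c := deriv h x with hcc
    have hbp : 0 < b := hpos x
    have hbne : b ≠ 0 := hbp.ne'
    have hder : ∀ y : ℝ, deriv (fun υ => c * chi0 (υ / b)) y
        = c * (6*y/b^2 - 6*y^2/b^3) := by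
      intro y
      have e : (fun υ : ℝ => c * chi0 (υ / b))
          = fun υ => (c*3/b^2) * υ^2 - (c*2/b^3) * υ^3 := by
        funext υ; simp only [chi0]; field_simp
      rw [e]
      have p2 : HasDerivAt (fun υ : ℝ => υ^2) (2*y) y := by
        simpa using hasDerivAt_pow 2 y
      have p3 : HasDerivAt (fun υ : ℝ => υ^3) (3*y^2) y := by
        simpa using hasDerivAt_pow 3 y
      have := ((p2.const_mul (c*3/b^2)).sub (p3.const_mul (c*2/b^3))).deriv
      rw [Pi.sub_def] at this
      rw [this]; field_simp; ring
    simp only [hder]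
    have hint : ∀ (d : ℝ) (n : ℕ), IntervalIntegrable (fun y : ℝ => d * y^n) volume 0 b :=
      fun d n => ((continuous_const.mul (continuous_pow n)).intervalIntegrable 0 b)
    have e2 : (fun y : ℝ => (c * (6*y/b^2 - 6*y^2/b^3))^2)
        = fun y => (36*c^2/b^4) * y^2 - (72*c^2/b^5) * y^3 + (36*c^2/b^6) * y^4 := by
      funext y; ring
    rw [e2]
    rw [intervalIntegral.integral_add ((hint _ 2).sub (hint _ 3)) (hint _ 4),
      intervalIntegral.integral_sub (hint _ 2) (hint _ 3),
      intervalIntegral.integral_const_mul, intervalIntegral.integral_const_mul,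
      intervalIntegral.integral_const_mul, integral_pow, integral_pow, integral_pow]
    field_simp
    ring
  simp only [key]
  rw [intervalIntegral.integral_const_mul]
  -- Step 2: integration by parts
  set v : ℝ → ℝ := fun x => Real.log (h x) - Real.log M with hv
  have hvc : Continuous v := (hc.log fun x => (hpos x).ne').sub continuous_const
  have hvder : ∀ x : ℝ, HasDerivAt v (deriv h x / h x) x := by
    intro x
    have := (Real.hasDerivAt_log (hpos x).ne').comp x (hd x).hasDerivAt
    simpa [hv, div_eq_inv_mul] using this.sub_const (Real.log M)
  have ibp : (∫ x in (0:ℝ)..L, (deriv h x)^2 / h x)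
      = - ∫ x in (0:ℝ)..L, deriv (deriv h) x * v x := by
    have h1 : (∫ x in (0:ℝ)..L, (deriv h x)^2 / h x)
        = ∫ x in (0:ℝ)..L, deriv h x * (deriv h x / h x) := by
      apply intervalIntegral.integral_congr
      intro x _; ring
    rw [h1, intervalIntegral.integral_mul_deriv_eq_deriv_mul
      (u := deriv h) (u' := deriv (deriv h)) (v := v) (v' := fun x => deriv h x / h x)
      (fun x _ => (hd1 x).hasDerivAt) (fun x _ => hvder x)
      (hc2.intervalIntegrable 0 L)
      ((hc1.div hc fun x => (hpos x).ne').intervalIntegrable 0 L)]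
    have hL' : deriv h L = deriv h 0 := by
      have : (fun x => h (x + L)) = h := funext fun x => hper x
      calc deriv h L = deriv (fun x => h (x + L)) 0 := by
            rw [deriv_comp_add_const]; norm_num
        _ = deriv h 0 := by rw [this]
    have hhL : h L = h 0 := by simpa using hper 0
    rw [hL']
    simp only [hv, hhL]
    ring
  -- Step 3: Cauchy–Schwarz
  have cs : - ∫ x in (0:ℝ)..L, deriv (deriv h) x * v x
      ≤ Real.sqrt (∫ x in (0:ℝ)..L, (deriv (deriv h) x)^2)
        * Real.sqrt (∫ x in (0:ℝ)..L, v x ^ 2) := by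
    calc - ∫ x in (0:ℝ)..L, deriv (deriv h) x * v x
        = ∫ x in (0:ℝ)..L, deriv (deriv h) x * (- v x) := by
          rw [← intervalIntegral.integral_neg]
          apply intervalIntegral.integral_congr
          intro x _; ring
      _ ≤ _ := by
          have h2 := cs_int hL.le hc2 hvc.neg
          refine h2.trans (le_of_eq ?_)
          have e : (∫ x in (0:ℝ)..L, (-v x) ^ 2) = ∫ x in (0:ℝ)..L, v x ^ 2 :=
            intervalIntegral.integral_congr fun x _ => by ring
          simp only [Pi.neg_apply]; rw [e]
  -- Step 4: bound on ∫ v²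
  have hv2 : (∫ x in (0:ℝ)..L, v x ^ 2) ≤ 4 * M * ∫ x in (0:ℝ)..L, 1 / h x := by
    have hpt : ∀ x ∈ Set.Icc (0:ℝ) L, v x ^ 2 ≤ 4 * M * (1 / h x) := by
      intro x hx
      have ht : (0:ℝ) < h x / M := div_pos (hpos x) hM0
      have ht1 : h x / M ≤ 1 := (div_le_one hM0).2 (hle x hx)
      have := log_sq_le ht ht1
      have hlog : v x = Real.log (h x / M) := by
        rw [hv, Real.log_div (hpos x).ne' hM0.ne']
      rw [hlog]
      calc Real.log (h x / M) ^ 2 ≤ 4 / (h x / M) := this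
        _ = 4 * M * (1 / h x) := by field_simp
    calc (∫ x in (0:ℝ)..L, v x ^ 2) ≤ ∫ x in (0:ℝ)..L, 4 * M * (1 / h x) := by
          apply intervalIntegral.integral_mono_on hL.le
            ((hvc.pow 2).intervalIntegrable 0 L)
            ((continuous_const.mul
              (continuous_const.div hc fun x => (hpos x).ne')).intervalIntegrable 0 L) hpt
      _ = 4 * M * ∫ x in (0:ℝ)..L, 1 / h x := intervalIntegral.integral_const_mul _ _
  have hA : (0:ℝ) ≤ Real.sqrt (∫ x in (0:ℝ)..L, (deriv (deriv h) x)^2) := Real.sqrt_nonneg _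
  have hB : Real.sqrt (∫ x in (0:ℝ)..L, v x ^ 2)
      ≤ 2 * Real.sqrt M * Real.sqrt (∫ x in (0:ℝ)..L, 1 / h x) := by
    have h4 : (4 : ℝ) * M * ∫ x in (0:ℝ)..L, 1 / h x
        = (2 * Real.sqrt M * Real.sqrt (∫ x in (0:ℝ)..L, 1 / h x))^2 := by
      have hint : (0:ℝ) ≤ ∫ x in (0:ℝ)..L, 1 / h x := by
        apply intervalIntegral.integral_nonneg hL.le
        exact fun x _ => div_nonneg zero_le_one (hpos x).le
      rw [mul_pow, mul_pow, Real.sq_sqrt hM0.le, Real.sq_sqrt hint]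
      ring
    calc Real.sqrt (∫ x in (0:ℝ)..L, v x ^ 2)
        ≤ Real.sqrt (4 * M * ∫ x in (0:ℝ)..L, 1 / h x) := Real.sqrt_le_sqrt hv2
      _ = _ := by
          rw [h4, Real.sqrt_sq (by positivity)]
  calc 6/5 * ∫ x in (0:ℝ)..L, (deriv h x)^2 / h x
      = 6/5 * (- ∫ x in (0:ℝ)..L, deriv (deriv h) x * v x) := by rw [ibp]
    _ ≤ 6/5 * (Real.sqrt (∫ x in (0:ℝ)..L, (deriv (deriv h) x)^2)
          * Real.sqrt (∫ x in (0:ℝ)..L, v x ^ 2)) := by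
        exact mul_le_mul_of_nonneg_left cs (by norm_num)
    _ ≤ 6/5 * (Real.sqrt (∫ x in (0:ℝ)..L, (deriv (deriv h) x)^2)
          * (2 * Real.sqrt M * Real.sqrt (∫ x in (0:ℝ)..L, 1 / h x))) := by
        refine mul_le_mul_of_nonneg_left (mul_le_mul_of_nonneg_left hB hA) (by norm_num)
    _ = 12/5 * Real.sqrt M * Real.sqrt (∫ x in (0:ℝ)..L, (deriv (deriv h) x)^2)
          * Real.sqrt (∫ x in (0:ℝ)..L, 1 / h x) := by ring
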